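/- Let n ∈ ℕ, S = {0, 1, …, 2^n − 1}, and p ∈ (0,1]. Let P_XY be the distribution on S×S given by P_XY(x,y) = p·2^{−n}·[x = y] + (1−p)·2^{−2n}, and let R_{Y→Y} be the channel on S given by R_{Y→Y}(y'|y) = p·[y' = y] + (1−p)·2^{−n}. Then the uniform distribution on S×S is invariant under id⊗R_{Y→Y}, and consequently for every α ∈ (1,∞), Λ_α(P_XY ‖ R_{Y→Y}) ≤ D_α(P_XY ‖ Unif_{S×S}) = (1/(α−1)) · log( 2^{−n}(1−p)^α(2^n − 1) + 2^{−n}·((1−p) + p·2^n)^α ). -/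

import Mathlib

noncomputable section

namespace CIT

/-- A probability distribution on a finite set. -/
def IsDist {X : Type*} [Fintype X] (p : X → ℝ) : Prop :=
  (∀ x, 0 ≤ p x) ∧ ∑ x, p x = 1

/-- Support inclusion `supp p ⊆ supp q`. -/
def suppLe {X : Type*} (p q : X → ℝ) : Prop := ∀ x, p x ≠ 0 → q x ≠ 0

open Classical in
/-- Relative entropy (base 2), with `0·log 0 = 0`, `+∞` if the support
condition fails. -/
def relEnt {X : Type*} [Fintype X] (p q : X → ℝ) : EReal :=
  if suppLe p q then ((∑ x, p x * Real.logb 2 (p x / q x) : ℝ) : EReal) else ⊤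

open Classical in
/-- Max-relative entropy `D_max(p‖q) = log max_{x ∈ supp p} p(x)/q(x)`,
`+∞` if the support condition fails. -/
def dMax {X : Type*} [Fintype X] (p q : X → ℝ) : EReal :=
  if suppLe p q then
    ((Real.logb 2 (sSup {r : ℝ | ∃ x, p x ≠ 0 ∧ r = p x / q x}) : ℝ) : EReal)
  else ⊤

open Classical in
/-- Rényi relative entropy of order `α` (base 2), with `D_1 := D` and `+∞`
when `α > 1` and the support condition fails. -/
def renyi {X : Type*} [Fintype X] (α : ℝ) (p q : X → ℝ) : EReal :=
  if α = 1 then relEnt p q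
  else if 1 < α ∧ ¬ suppLe p q then ⊤
  else (((α - 1)⁻¹ * Real.logb 2 (∑ x, p x ^ α * q x ^ (1 - α)) : ℝ) : EReal)

/-- The `XY`-marginal of a tripartite distribution. -/
def margXY {X Y Z : Type*} [Fintype Z] (P : X × Y × Z → ℝ) : X × Y → ℝ :=
  fun t => ∑ z, P (t.1, t.2, z)

/-- The `YZ`-marginal of a tripartite distribution. -/
def margYZ {X Y Z : Type*} [Fintype X] (P : X × Y × Z → ℝ) : Y × Z → ℝ :=
  fun t => ∑ x, P (x, t.1, t.2)

/-- The `Y`-marginal of a tripartite distribution. -/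
def margY {X Y Z : Type*} [Fintype X] [Fintype Z] (P : X × Y × Z → ℝ) : Y → ℝ :=
  fun y => ∑ x, ∑ z, P (x, y, z)

/-- Conditional mutual information
`I(X:Z|Y)_P = Σ P(x,y,z) log( P(x,y,z)·P_Y(y) / (P_XY(x,y)·P_YZ(y,z)) )`. -/
def cmi {X Y Z : Type*} [Fintype X] [Fintype Y] [Fintype Z] (P : X × Y × Z → ℝ) : ℝ :=
  ∑ s : X × Y × Z,
    P s * Real.logb 2 (P s * margY P s.2.1 / (margXY P (s.1, s.2.1) * margYZ P (s.2.1, s.2.2)))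

/-- A classical channel from `Y` to `W`: a family of conditional distributions. -/
def IsChannel {Y W : Type*} [Fintype W] (R : Y → W → ℝ) : Prop :=
  ∀ y, (∀ w, 0 ≤ R y w) ∧ ∑ w, R y w = 1

/-- Action `(id ⊗ R)` of a channel `R : Y → W` on a joint distribution on `X × Y`. -/
def applyChan {X Y W : Type*} [Fintype Y] (R : Y → W → ℝ) (P : X × Y → ℝ) : X × W → ℝ :=
  fun t => ∑ y, P (t.1, y) * R y t.2

/-- Action of a channel `R : Y → W` on a distribution on `Y`. -/
def chanOnDist {Y W : Type*} [Fintype Y] (R : Y → W → ℝ) (q : Y → ℝ) : W → ℝ :=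
  fun w => ∑ y, q y * R y w

/-- Marginal channel `R_{Y→Y}(y'|y) = Σ_{z'} R(y',z'|y)`. -/
def margChan {Y Y' Z' : Type*} [Fintype Z'] (R : Y → Y' × Z' → ℝ) : Y → Y' → ℝ :=
  fun y y' => ∑ z', R y (y', z')

end CIT

/-!
The depolarizing channel is doubly stochastic, so it fixes the uniform distribution, which is
therefore a feasible point of the infimum defining `Λ_α`. Against a constant density `u` the Rényi
sum factors as `u^(1-α) · Σ P^α`. With `u = |S|⁻²` the isotropic distribution equals
`(1 - p + p|S|)·u` on the diagonal and `(1 - p)·u` off it, so `Σ P^α` is a two-term count.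
-/

namespace CIT

theorem applyChan_const {X Y W : Type*} [Fintype Y] {R : Y → W → ℝ}
    (hR : ∀ w, ∑ y, R y w = 1) (c : ℝ) :
    applyChan R (fun _ : X × Y => c) = fun _ => c := by
  funext t
  simp [applyChan, ← Finset.mul_sum, hR]

theorem renyi_const {X : Type*} [Fintype X] {α u : ℝ} (hα : α ≠ 1) (hu : u ≠ 0) (P : X → ℝ) :
    renyi α P (fun _ => u) =
      (((α - 1)⁻¹ * Real.logb 2 (u ^ (1 - α) * ∑ x, P x ^ α) : ℝ) : EReal) := by
  have hsupp : suppLe P (fun _ => u) := fun _ _ => hu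
  rw [renyi, if_neg hα, if_neg (fun h => h.2 hsupp), Finset.mul_sum]
  simp_rw [mul_comm (u ^ (1 - α))]

theorem isDist_uniform_prod {S : Type*} [Fintype S] [Nonempty S] :
    IsDist (fun _ : S × S => ((Fintype.card S : ℝ)⁻¹) ^ 2) := by
  refine ⟨fun _ => by positivity, ?_⟩
  simp [Fintype.card_prod]
  field_simp

variable {S : Type*} [Fintype S] [DecidableEq S]

theorem sum_prod_ite_eq {R : Type*} [CommRing R] (a b : R) :
    ∑ t : S × S, (if t.1 = t.2 then a else b) =
      Fintype.card S * (a - b) + Fintype.card S ^ 2 * b := by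
  have hsplit : ∀ x y : S, (if x = y then a else b) = (if x = y then a - b else 0) + b := by
    intro x y
    split_ifs <;> ring
  simp [Fintype.sum_prod_type, hsplit, Finset.sum_add_distrib]
  ring

def depolarizingChannel (p : ℝ) : S → S → ℝ := fun y y' =>
  p * (if y' = y then 1 else 0) + (1 - p) * (Fintype.card S : ℝ)⁻¹

theorem sum_depolarizingChannel [Nonempty S] (p : ℝ) (y' : S) :
    ∑ y, depolarizingChannel p y y' = 1 := by
  simp [depolarizingChannel, Finset.sum_add_distrib]
  field_simp
  ring

def isotropicDist (p : ℝ) : S × S → ℝ := fun t =>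
  p * (Fintype.card S : ℝ)⁻¹ * (if t.1 = t.2 then 1 else 0) +
    (1 - p) * ((Fintype.card S : ℝ)⁻¹) ^ 2

theorem isotropicDist_eq_ite_mul [Nonempty S] (p : ℝ) (t : S × S) :
    isotropicDist p t =
      (if t.1 = t.2 then 1 - p + p * Fintype.card S else 1 - p) * ((Fintype.card S : ℝ)⁻¹) ^ 2 := by
  unfold isotropicDist
  split_ifs
  · field_simp
    ring
  · ring

theorem sum_isotropicDist_rpow [Nonempty S] {p : ℝ} (hp0 : 0 ≤ p) (hp1 : p ≤ 1) (α : ℝ) :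
    ∑ t : S × S, isotropicDist p t ^ α =
      (((Fintype.card S : ℝ)⁻¹) ^ 2) ^ α *
        (Fintype.card S * ((1 - p + p * Fintype.card S) ^ α - (1 - p) ^ α) +
          Fintype.card S ^ 2 * (1 - p) ^ α) := by
  have hdiag : 0 ≤ 1 - p + p * Fintype.card S := by
    have : (1 : ℝ) ≤ Fintype.card S := by exact_mod_cast Fintype.card_pos
    nlinarith
  have hterm : ∀ t : S × S, isotropicDist p t ^ α = (((Fintype.card S : ℝ)⁻¹) ^ 2) ^ α *
      (if t.1 = t.2 then (1 - p + p * Fintype.card S) ^ α else (1 - p) ^ α) := by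
    intro t
    rw [isotropicDist_eq_ite_mul, Real.mul_rpow (by split_ifs <;> linarith) (by positivity),
      mul_comm, apply_ite (· ^ α)]
  simp_rw [hterm, ← Finset.mul_sum, sum_prod_ite_eq]

end CIT

open CIT in
/-- the uniform distribution on `S×S` is invariant under
`id⊗R_{Y→Y}`, and consequently for every `α ∈ (1,∞)`,
`Λ_α(P_XY‖R_{Y→Y}) ≤ D_α(P_XY‖Unif) = (1/(α−1))·log(2^{−n}(1−p)^α(2^n−1) + 2^{−n}((1−p)+p·2^n)^α)`. -/
theorem lambda_alpha_upper_bound (n : ℕ) (p : ℝ) (hp0 : 0 < p) (hp1 : p ≤ 1)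
    (PXY : Fin (2 ^ n) × Fin (2 ^ n) → ℝ)
    (hPXY : PXY = fun t =>
      p * ((2 ^ n : ℕ) : ℝ)⁻¹ * (if t.1 = t.2 then 1 else 0) +
        (1 - p) * (((2 ^ n : ℕ) : ℝ)⁻¹) ^ 2)
    (Rch : Fin (2 ^ n) → Fin (2 ^ n) → ℝ)
    (hRch : Rch = fun y y' =>
      p * (if y' = y then 1 else 0) + (1 - p) * ((2 ^ n : ℕ) : ℝ)⁻¹) :
    applyChan Rch (fun _ : Fin (2 ^ n) × Fin (2 ^ n) => (((2 ^ n : ℕ) : ℝ)⁻¹) ^ 2) =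
        (fun _ => (((2 ^ n : ℕ) : ℝ)⁻¹) ^ 2) ∧
      ∀ α : ℝ, 1 < α →
        (⨅ τ ∈ {τ : Fin (2 ^ n) × Fin (2 ^ n) → ℝ |
            IsDist τ ∧ applyChan Rch τ = τ}, renyi α PXY τ)
            ≤ renyi α PXY (fun _ => (((2 ^ n : ℕ) : ℝ)⁻¹) ^ 2) ∧
          renyi α PXY (fun _ => (((2 ^ n : ℕ) : ℝ)⁻¹) ^ 2) =
            (((α - 1)⁻¹ * Real.logb 2
              (((2 ^ n : ℕ) : ℝ)⁻¹ * (1 - p) ^ α * (((2 ^ n : ℕ) : ℝ) - 1) +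
                ((2 ^ n : ℕ) : ℝ)⁻¹ * ((1 - p) + p * ((2 ^ n : ℕ) : ℝ)) ^ α) : ℝ) : EReal) := by
  have hcard : ((2 ^ n : ℕ) : ℝ) = (Fintype.card (Fin (2 ^ n)) : ℝ) := by rw [Fintype.card_fin]
  rw [hcard] at hPXY hRch ⊢
  obtain rfl : PXY = isotropicDist p := hPXY
  obtain rfl : Rch = depolarizingChannel p := hRch
  set N : ℝ := (Fintype.card (Fin (2 ^ n)) : ℝ)
  have hN : 0 < N := by positivity
  have hinv := applyChan_const (X := Fin (2 ^ n)) (sum_depolarizingChannel (S := Fin (2 ^ n)) p) ((N⁻¹) ^ 2)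
  refine ⟨hinv, fun α hα => ⟨iInf₂_le _ ⟨isDist_uniform_prod (S := Fin (2 ^ n)), hinv⟩, ?_⟩⟩
  have hu : (N⁻¹ ^ 2) ^ (1 - α) * (N⁻¹ ^ 2) ^ α = N⁻¹ ^ 2 := by
    rw [← Real.rpow_add (by positivity), sub_add_cancel, Real.rpow_one]
  rw [renyi_const hα.ne' (by positivity), sum_isotropicDist_rpow hp0.le hp1, ← mul_assoc, hu]
  congr 3
  field_simp
  ring
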